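/- Suppose in an associative algebra, elements satisfy [x(n+1), x(n−1)]_{q²} + [x(n), x(n)]_{q²} = 0 and [x(n+2), x(n−1)]_{q²} + [x(n), x(n+1)]_{q²} = 0, where [a,b]_t = ab − t·ba, and suppose an element a(1) satisfies [a(1), x(k)] = c·x(k+1) for all k with c ≠ 0. Then [x(n+1), x(n)]_{q²} = 0. -/
import Mathlib


/-- The deformed bracket `[x,y]_t = x*y - t • (y*x)`. -/
def qbr {K A : Type*} [CommRing K] [Ring A] [Algebra K A] (t : K) (x y : A) : A :=
  x * y - t • (y * x)

/-- From `[x(n+1), x(n−1)]_{q²} + [x(n), x(n)]_{q²} = 0` and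
`[x(n+2), x(n−1)]_{q²} + [x(n), x(n+1)]_{q²} = 0`, together with the derivation property
`[a(1), x(k)] = c·x(k+1)` with `c ≠ 0`, one deduces `[x(n+1), x(n)]_{q²} = 0`. -/
theorem qcomm_step {K A : Type*} [Field K] [Ring A] [Algebra K A]
    (q c : K) (hc : c ≠ 0) (htwo : (2 : K) ≠ 0) (a1 : A) (x : ℤ → A)
    (hder : ∀ k, a1 * x k - x k * a1 = c • x (k + 1)) (n : ℤ)
    (h25 : qbr (q ^ 2) (x (n + 1)) (x (n - 1)) + qbr (q ^ 2) (x n) (x n) = 0)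
    (h26 : qbr (q ^ 2) (x (n + 2)) (x (n - 1)) + qbr (q ^ 2) (x n) (x (n + 1)) = 0) :
    qbr (q ^ 2) (x (n + 1)) (x n) = 0 := by
  set t := q ^ 2 with ht
  -- derivation on products
  have hDm : ∀ j k : ℤ, a1 * (x j * x k) - (x j * x k) * a1
      = c • (x (j + 1) * x k + x j * x (k + 1)) := by
    intro j k
    have hj := hder j
    have hk := hder k
    have h : a1 * (x j * x k) - (x j * x k) * a1
        = (a1 * x j - x j * a1) * x k + x j * (a1 * x k - x k * a1) := by noncomm_ring
    rw [h, hj, hk, smul_mul_assoc, mul_smul_comm, smul_add]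
  -- derivation on qbr
  have hD : ∀ j k : ℤ, a1 * qbr t (x j) (x k) - qbr t (x j) (x k) * a1
      = c • (qbr t (x (j + 1)) (x k) + qbr t (x j) (x (k + 1))) := by
    intro j k
    have h1 := hDm j k
    have h2 := hDm k j
    simp only [qbr, mul_sub, sub_mul, mul_smul_comm, smul_mul_assoc]
    rw [show a1 * (x j * x k) - t • (a1 * (x k * x j)) - (x j * x k * a1 - t • (x k * x j * a1))
        = (a1 * (x j * x k) - x j * x k * a1) - t • (a1 * (x k * x j) - x k * x j * a1) by
      rw [smul_sub]; abel]
    rw [h1, h2]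
    module
  -- apply derivation to h25
  have key : c • (qbr t (x (n + 1 + 1)) (x (n - 1)) + qbr t (x (n + 1)) (x (n - 1 + 1))
      + (qbr t (x (n + 1)) (x n) + qbr t (x n) (x (n + 1)))) = 0 := by
    have e : a1 * (qbr t (x (n + 1)) (x (n - 1)) + qbr t (x n) (x n))
        - (qbr t (x (n + 1)) (x (n - 1)) + qbr t (x n) (x n)) * a1 = 0 := by
      rw [h25]; simp
    rw [mul_add, add_mul] at e
    rw [show a1 * qbr t (x (n + 1)) (x (n - 1)) + a1 * qbr t (x n) (x n)
        - (qbr t (x (n + 1)) (x (n - 1)) * a1 + qbr t (x n) (x n) * a1)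
        = (a1 * qbr t (x (n + 1)) (x (n - 1)) - qbr t (x (n + 1)) (x (n - 1)) * a1)
        + (a1 * qbr t (x n) (x n) - qbr t (x n) (x n) * a1) by abel] at e
    rw [hD, hD, ← smul_add] at e
    exact e
  rw [show n + 1 + 1 = n + 2 by ring, show n - 1 + 1 = n by ring] at key
  have key2 : c • ((2 : K) • qbr t (x (n + 1)) (x n)
      + (qbr t (x (n + 2)) (x (n - 1)) + qbr t (x n) (x (n + 1)))) = 0 := by
    rw [← key]
    congr 1
    rw [two_smul]
    abel
  rw [h26, add_zero, smul_smul] at key2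
  have h2c : c * (2 : K) ≠ 0 := mul_ne_zero hc htwo
  exact (smul_eq_zero_iff_right h2c).mp key2
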